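/- Let ϑ(ξ,η) = (c₁η − c₂, c₃ − c₁ξ) with c₁ ≠ 0. The linear map n ↦ rot(n ϑ) = (c₃ − c₁ξ) n_ξ + (c₂ − c₁η) n_η − 2c₁ n from P^p(ℝ²) to P^p(ℝ²) is injective; equivalently, rot(∑ᵢ cᵢ nᵢ ϑ) = 0 for a basis {nᵢ} of P^p implies all cᵢ = 0. -/

import Mathlib

open MvPolynomial

/-- The scalar curl of `n·ϑ` for the template vector field
`ϑ(ξ,η) = (c₁η - c₂, c₃ - c₁ξ)`:
`rot(nϑ) = (c₃ - c₁ξ) n_ξ + (c₂ - c₁η) n_η - 2c₁ n`. -/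
noncomputable def rotTemplate (c₁ c₂ c₃ : ℝ) (n : MvPolynomial (Fin 2) ℝ) :
    MvPolynomial (Fin 2) ℝ :=
  (C c₃ - C c₁ * X 0) * pderiv 0 n + (C c₂ - C c₁ * X 1) * pderiv 1 n - C (2 * c₁) * n

/-!
Let `m` be a monomial of maximal total degree `d` in `n`. The first-order terms `c₃ n_ξ`, `c₂ n_η`
lower the degree, so they contribute to the coefficient of `m` only through monomials of degree
`d + 1`, which do not occur; the Euler operator `ξ n_ξ + η n_η` multiplies it by `d`. Hence the
coefficient of `m` in `rot(nϑ)` is `-c₁ (d + 2)` times that in `n`, and it is nonzero.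
-/

namespace MvPolynomial

variable {σ R : Type*} [CommSemiring R]

theorem coeff_X_mul_pderiv [DecidableEq σ] (i : σ) (m : σ →₀ ℕ) (p : MvPolynomial σ R) :
    coeff m (X i * pderiv i p) = m i * coeff m p := by
  rw [coeff_X_mul']
  split_ifs with hi
  · have hmi : 1 ≤ m i := Nat.one_le_iff_ne_zero.mpr (Finsupp.mem_support_iff.mp hi)
    rw [coeff_pderiv, tsub_add_cancel_of_le (Finsupp.single_le_iff.mpr hmi), mul_comm,
      Finsupp.tsub_apply, Finsupp.single_eq_same, ← Nat.cast_add_one, Nat.sub_add_cancel hmi]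
  · rw [Finsupp.notMem_support_iff.mp hi, Nat.cast_zero, zero_mul]

theorem coeff_pderiv_eq_zero_of_totalDegree_le (i : σ) {m : σ →₀ ℕ} {p : MvPolynomial σ R}
    (h : p.totalDegree ≤ m.degree) : coeff m (pderiv i p) = 0 := by
  classical
  rw [coeff_pderiv, coeff_eq_zero_of_totalDegree_lt, zero_mul]
  rw [← Finsupp.degree_apply, map_add, Finsupp.degree_single]
  omega

theorem exists_coeff_ne_zero_degree_eq_totalDegree {p : MvPolynomial σ R} (hp : p ≠ 0) :
    ∃ m, coeff m p ≠ 0 ∧ m.degree = p.totalDegree := by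
  obtain ⟨m, hm, hdeg⟩ := Finset.exists_mem_eq_sup p.support (support_nonempty.mpr hp)
    fun s => s.sum fun _ e => e
  exact ⟨m, mem_support_iff.mp hm, hdeg.symm⟩

end MvPolynomial

theorem coeff_rotTemplate_of_totalDegree_le (c₁ c₂ c₃ : ℝ) {m : Fin 2 →₀ ℕ}
    {n : MvPolynomial (Fin 2) ℝ} (h : n.totalDegree ≤ m.degree) :
    coeff m (rotTemplate c₁ c₂ c₃ n) = -c₁ * (m.degree + 2) * coeff m n := by
  simp only [rotTemplate, sub_mul, add_mul, mul_assoc, coeff_sub, coeff_add, coeff_C_mul,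
    coeff_X_mul_pderiv, coeff_pderiv_eq_zero_of_totalDegree_le _ h, Finsupp.degree_eq_sum,
    Fin.sum_univ_two]
  push_cast
  ring

/-- For `ϑ(ξ,η) = (c₁η - c₂, c₃ - c₁ξ)` with `c₁ ≠ 0`, the linear map
`n ↦ rot(nϑ)` on bivariate polynomials of total degree at most `p` is injective:
`rot(nϑ) = 0` implies `n = 0`. -/
theorem rotTemplate_injective (c₁ c₂ c₃ : ℝ) (hc₁ : c₁ ≠ 0) (p : ℕ) :
    ∀ n : MvPolynomial (Fin 2) ℝ, n.totalDegree ≤ p →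
      rotTemplate c₁ c₂ c₃ n = 0 → n = 0 := by
  intro n _ hrot
  by_contra hn
  obtain ⟨m, hm, hdeg⟩ := exists_coeff_ne_zero_degree_eq_totalDegree hn
  have hcoeff := coeff_rotTemplate_of_totalDegree_le c₁ c₂ c₃ hdeg.ge
  rw [hrot, coeff_zero] at hcoeff
  have hfactor : -c₁ * ((m.degree : ℝ) + 2) ≠ 0 :=
    mul_ne_zero (neg_ne_zero.mpr hc₁) (by positivity)
  exact mul_ne_zero hfactor hm hcoeff.symm
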